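/- arXiv:1804.02800 — 5 statements merged into one kernel-verified Lean document; each statement's English description precedes it below -/
import Mathlib

section
/- For every N ≥ 1 and p ∈ (0,1), the Shannon entropy of the partially-labeled bipartite graph distribution satisfies the exact identity H_Bp(N,p) = N²·H(p) − log₂(N!) + Σ_ω P̄(ω)·log₂|Aut(ω)|, where the sum ranges over all row-equivalence classes ω, P̄(ω) is the probability of the class ω under the pushforward distribution, and |Aut(ω)| is the common size of the row stabilizer of matrices in ω. -/
open Finset

attribute [local instance] Classical.propDecidable

noncomputable section

/-- Row equivalence of adjacency matrices: `A` and `B` are equivalent when some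
permutation of the rows (i.e. a relabeling of the unlabeled vertex part) sends `A` to `B`. -/
def rowRelSetoid (N : ℕ) : Setoid (Fin N → Fin N → Bool) where
  r A B := ∃ σ : Equiv.Perm (Fin N), ∀ i j, A (σ i) j = B i j
  iseqv := by
    refine ⟨fun A => ⟨1, fun i j => rfl⟩, ?_, ?_⟩
    · rintro A B ⟨σ, h⟩
      refine ⟨σ⁻¹, fun i j => ?_⟩
      rw [← h (σ⁻¹ i) j]
      simp
    · rintro A B C ⟨σ, h⟩ ⟨τ, h'⟩
      refine ⟨σ * τ, fun i j => ?_⟩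
      rw [Equiv.Perm.mul_apply, h (τ i) j, h' i j]

instance (N : ℕ) : Fintype (Quotient (rowRelSetoid N)) := Fintype.ofFinite _

/-- Number of `true` entries (edges) of an adjacency matrix. -/
def edgeCount {N : ℕ} (A : Fin N → Fin N → Bool) : ℕ :=
  (univ.filter fun ij : Fin N × Fin N => A ij.1 ij.2 = true).card

/-- Probability of a fixed adjacency matrix under i.i.d. Bernoulli(p) entries. -/
def matProb (N : ℕ) (p : ℝ) (A : Fin N → Fin N → Bool) : ℝ :=
  p ^ edgeCount A * (1 - p) ^ (N ^ 2 - edgeCount A)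

/-- The pushforward probability of a row-equivalence class (the partially-labeled
bipartite graph distribution). -/
def classProb (N : ℕ) (p : ℝ) (ω : Quotient (rowRelSetoid N)) : ℝ :=
  ∑ A : Fin N → Fin N → Bool,
    if Quotient.mk (rowRelSetoid N) A = ω then matProb N p A else 0

/-- Shannon entropy (base 2) of the partially-labeled bipartite graph distribution. -/
def HBp (N : ℕ) (p : ℝ) : ℝ :=
  ∑ ω : Quotient (rowRelSetoid N), -(classProb N p ω * Real.logb 2 (classProb N p ω))

/-- Binary entropy function, base 2. -/
def binEnt (p : ℝ) : ℝ := -(p * Real.logb 2 p) - (1 - p) * Real.logb 2 (1 - p)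

/-- Size of the row stabilizer (automorphism group) of a matrix. -/
def autCard {N : ℕ} (A : Fin N → Fin N → Bool) : ℕ :=
  Fintype.card {σ : Equiv.Perm (Fin N) // ∀ i j, A (σ i) j = A i j}

/-!
Row permutations act on matrices by `A ↦ A ∘ σ` without changing their probability; the
row-equivalence classes are the orbits and `Aut(A)` is the stabilizer. By orbit–stabilizer each
matrix of a class `ω` has probability `P̄(ω)·|Aut(ω)|/N!`, so
`-log P̄(ω) = -log P(A) - log N! + log |Aut(ω)|`. Averaging over `ω` turns the first term into
the entropy of the labeled matrix, which is `N²·H(p)` because the entropy of a product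
distribution is the sum of the entropies of its factors.
-/

open MulAction

section ProductWeights

variable {ι α : Type*} [Fintype ι] [DecidableEq ι] [Fintype α]

theorem sum_pi_prod_eq_one (q : ι → α → ℝ) (hq : ∀ i, ∑ a, q i a = 1) :
    ∑ x : ι → α, ∏ i, q i (x i) = 1 := by
  rw [← Fintype.prod_sum]
  simp only [hq, prod_const_one]

theorem sum_pi_prod_mul_sum (q : ι → α → ℝ) (hq : ∀ i, ∑ a, q i a = 1) (f : ι → α → ℝ) :
    ∑ x : ι → α, (∏ i, q i (x i)) * ∑ i, f i (x i) = ∑ i, ∑ a, q i a * f i a := by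
  simp_rw [mul_sum]
  rw [sum_comm]
  refine sum_congr rfl fun i _ => ?_
  -- the factor `f i (x i)` is absorbed into the `i`-th weight, leaving a product of sums
  have hupd : ∀ x : ι → α, (∏ k, q k (x k)) * f i (x i)
      = ∏ k, Function.update q i (fun a => q i a * f i a) k (x k) := by
    intro x
    rw [← mul_prod_erase univ (fun k => q k (x k)) (mem_univ i),
      ← mul_prod_erase univ (fun k => Function.update q i _ k (x k)) (mem_univ i),
      Function.update_self, mul_right_comm]
    congr 1
    exact prod_congr rfl fun k hk => by rw [Function.update_of_ne (ne_of_mem_erase hk)]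
  simp_rw [hupd, ← Fintype.prod_sum]
  rw [← mul_prod_erase univ _ (mem_univ i),
    prod_congr rfl fun k hk => by rw [Function.update_of_ne (ne_of_mem_erase hk), hq k]]
  simp only [Function.update_self, prod_const_one, mul_one]

theorem sum_pi_prod_mul_logb_prod (b : ℝ) (q : ι → α → ℝ) (hq : ∀ i, ∑ a, q i a = 1)
    (hq0 : ∀ i a, q i a ≠ 0) :
    ∑ x : ι → α, (∏ i, q i (x i)) * Real.logb b (∏ i, q i (x i))
      = ∑ i, ∑ a, q i a * Real.logb b (q i a) := by
  simp_rw [Real.logb_prod _ _ fun i _ => hq0 i _]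
  exact sum_pi_prod_mul_sum q hq fun i a => Real.logb b (q i a)

end ProductWeights

def bernoulliWeight (p : ℝ) (b : Bool) : ℝ := if b then p else 1 - p

section Matrices

variable {N : ℕ} {p : ℝ}

lemma sum_bernoulliWeight (p : ℝ) : ∑ b, bernoulliWeight p b = 1 := by
  simp [bernoulliWeight]

lemma bernoulliWeight_ne_zero (hp0 : 0 < p) (hp1 : p < 1) (b : Bool) :
    bernoulliWeight p b ≠ 0 := by
  cases b <;> simp [bernoulliWeight] <;> linarith

lemma sum_bernoulliWeight_mul_logb (p : ℝ) :
    ∑ b, bernoulliWeight p b * Real.logb 2 (bernoulliWeight p b) = -binEnt p := by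
  simp [bernoulliWeight, binEnt]
  ring

lemma matProb_eq_prod (p : ℝ) (A : Fin N → Fin N → Bool) :
    matProb N p A = ∏ ij : Fin N × Fin N, bernoulliWeight p (A ij.1 ij.2) := by
  have hcompl : #{ij : Fin N × Fin N | ¬A ij.1 ij.2 = true} = N ^ 2 - edgeCount A := by
    rw [edgeCount, eq_tsub_iff_add_eq_of_le, add_comm, card_filter_add_card_filter_not]
    · simp [sq]
    · exact (card_filter_le _ _).trans (by simp [sq])
  simp only [bernoulliWeight, prod_ite, prod_const, hcompl, matProb, edgeCount]

lemma matProb_ne_zero (hp0 : 0 < p) (hp1 : p < 1) (A : Fin N → Fin N → Bool) :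
    matProb N p A ≠ 0 := by
  rw [matProb_eq_prod]
  exact prod_ne_zero_iff.mpr fun _ _ => bernoulliWeight_ne_zero hp0 hp1 _

lemma sum_matProb (p : ℝ) : ∑ A : Fin N → Fin N → Bool, matProb N p A = 1 := by
  rw [← (Equiv.curry _ _ _).sum_comp]
  simp only [matProb_eq_prod, Equiv.curry_apply, Function.curry_apply]
  exact sum_pi_prod_eq_one _ fun _ => sum_bernoulliWeight p

lemma sum_matProb_mul_logb (hp0 : 0 < p) (hp1 : p < 1) :
    ∑ A : Fin N → Fin N → Bool, matProb N p A * Real.logb 2 (matProb N p A)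
      = -((N : ℝ) ^ 2 * binEnt p) := by
  rw [← (Equiv.curry _ _ _).sum_comp]
  simp only [matProb_eq_prod, Equiv.curry_apply, Function.curry_apply]
  rw [sum_pi_prod_mul_logb_prod 2 (fun _ => bernoulliWeight p) (fun _ => sum_bernoulliWeight p)
    fun _ => bernoulliWeight_ne_zero hp0 hp1]
  simp only [sum_bernoulliWeight_mul_logb, sum_const, card_univ, Fintype.card_prod,
    Fintype.card_fin, nsmul_eq_mul]
  push_cast
  ring

end Matrices

section RowAction

variable {N : ℕ}

lemma mk_eq_mk_iff_mem_orbit {A B : Fin N → Fin N → Bool} :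
    Quotient.mk (rowRelSetoid N) A = Quotient.mk (rowRelSetoid N) B
      ↔ B ∈ orbit (Equiv.Perm (Fin N))ᵈᵐᵃ A := by
  rw [Quotient.eq]
  constructor
  · rintro ⟨σ, hσ⟩
    exact ⟨DomMulAct.mk σ, funext fun i => funext fun j => hσ i j⟩
  · rintro ⟨c, rfl⟩
    exact ⟨DomMulAct.mk.symm c, fun _ _ => rfl⟩

lemma card_stabilizer_eq_autCard (A : Fin N → Fin N → Bool) :
    Nat.card (stabilizer (Equiv.Perm (Fin N))ᵈᵐᵃ A) = autCard A := by
  rw [autCard, ← Nat.card_eq_fintype_card]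
  refine Nat.card_congr (DomMulAct.mk.symm.subtypeEquiv fun c => ?_)
  simp only [mem_stabilizer_iff, funext_iff, DomMulAct.smul_apply, Equiv.Perm.smul_def]

lemma autCard_pos (A : Fin N → Fin N → Bool) : 0 < autCard A :=
  Fintype.card_pos_iff.mpr ⟨⟨1, fun _ _ => rfl⟩⟩

lemma card_class_mul_autCard (ω : Quotient (rowRelSetoid N)) :
    #{A | Quotient.mk (rowRelSetoid N) A = ω} * autCard ω.out = N.factorial := by
  have hclass : (({A | Quotient.mk (rowRelSetoid N) A = ω} : Finset _) : Set _)
      = orbit (Equiv.Perm (Fin N))ᵈᵐᵃ ω.out := by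
    ext B
    rw [coe_filter, ← mk_eq_mk_iff_mem_orbit, Quotient.out_eq, eq_comm]
    simp only [mem_univ, true_and, Set.mem_ofPred_eq]
  rw [← Set.ncard_coe_finset, hclass, ← index_stabilizer, ← card_stabilizer_eq_autCard, mul_comm,
    Subgroup.card_mul_index, Nat.card_congr DomMulAct.mk.symm, Nat.card_perm, Nat.card_fin]

lemma matProb_smul (p : ℝ) (c : (Equiv.Perm (Fin N))ᵈᵐᵃ) (A : Fin N → Fin N → Bool) :
    matProb N p (c • A) = matProb N p A := by
  simp only [matProb_eq_prod, DomMulAct.smul_apply, Equiv.Perm.smul_def]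
  exact Fintype.prod_equiv ((DomMulAct.mk.symm c).prodCongr (Equiv.refl _)) _ _ fun _ => rfl

lemma matProb_eq_of_mk_eq (p : ℝ) {A B : Fin N → Fin N → Bool}
    (h : Quotient.mk (rowRelSetoid N) A = Quotient.mk (rowRelSetoid N) B) :
    matProb N p A = matProb N p B := by
  obtain ⟨c, rfl⟩ := mk_eq_mk_iff_mem_orbit.mp h
  exact (matProb_smul p c A).symm

lemma classProb_eq (p : ℝ) (ω : Quotient (rowRelSetoid N)) :
    classProb N p ω = N.factorial / autCard ω.out * matProb N p ω.out := by
  have haut : (autCard ω.out : ℝ) ≠ 0 := Nat.cast_ne_zero.mpr (autCard_pos _).ne'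
  rw [classProb, ← sum_filter,
    sum_congr rfl fun A hA => matProb_eq_of_mk_eq p ((mem_filter.1 hA).2.trans ω.out_eq.symm),
    sum_const, nsmul_eq_mul, ← card_class_mul_autCard ω]
  push_cast
  field_simp

lemma sum_classProb_mul (p : ℝ) (f : Quotient (rowRelSetoid N) → ℝ) :
    ∑ ω, classProb N p ω * f ω
      = ∑ A : Fin N → Fin N → Bool, matProb N p A * f (Quotient.mk (rowRelSetoid N) A) := by
  simp only [classProb, sum_mul, ite_mul, zero_mul]
  rw [sum_comm]
  exact sum_congr rfl fun A _ => by rw [sum_ite_eq, if_pos (mem_univ _)]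

end RowAction

theorem partially_labeled_entropy_exact_general (N : ℕ) (p : ℝ)
    (hp0 : 0 < p) (hp1 : p < 1) :
    HBp N p =
      (N : ℝ) ^ 2 * binEnt p - Real.logb 2 (N.factorial : ℝ)
        + ∑ ω : Quotient (rowRelSetoid N),
            classProb N p ω * Real.logb 2 ((autCard (Quotient.out ω) : ℝ)) := by
  have hlog (ω : Quotient (rowRelSetoid N)) : Real.logb 2 (classProb N p ω)
      = Real.logb 2 N.factorial - Real.logb 2 (autCard ω.out)
        + Real.logb 2 (matProb N p ω.out) := by
    have hm := matProb_ne_zero hp0 hp1 ω.out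
    have ha : (autCard ω.out : ℝ) ≠ 0 := Nat.cast_ne_zero.mpr (autCard_pos _).ne'
    have hf : (N.factorial : ℝ) ≠ 0 := Nat.cast_ne_zero.mpr N.factorial_ne_zero
    rw [classProb_eq, Real.logb_mul (div_ne_zero hf ha) hm, Real.logb_div hf ha]
  have htotal : ∑ ω, classProb N p ω = 1 := by
    simpa [sum_matProb] using sum_classProb_mul p (N := N) fun _ => 1
  have hlabeled : ∑ ω, classProb N p ω * Real.logb 2 (matProb N p ω.out)
      = -((N : ℝ) ^ 2 * binEnt p) := by
    rw [sum_classProb_mul, ← sum_matProb_mul_logb hp0 hp1]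
    exact sum_congr rfl fun A _ => by rw [matProb_eq_of_mk_eq p (Quotient.out_eq _)]
  calc HBp N p
      = ∑ ω, (classProb N p ω * Real.logb 2 (autCard ω.out)
          - classProb N p ω * Real.logb 2 N.factorial
          - classProb N p ω * Real.logb 2 (matProb N p ω.out)) :=
        sum_congr rfl fun ω _ => by rw [hlog]; ring
    _ = _ := by
        rw [sum_sub_distrib, sum_sub_distrib, ← sum_mul, htotal, hlabeled]
        ring

/-- Exact identity for the entropy of the partially-labeled bipartite graph distribution:
`H_Bp(N,p) = N²·H(p) − log₂(N!) + Σ_ω P̄(ω)·log₂|Aut(ω)|`. -/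
theorem partially_labeled_entropy_exact (N : ℕ) (hN : 1 ≤ N) (p : ℝ)
    (hp0 : 0 < p) (hp1 : p < 1) :
    HBp N p =
      (N : ℝ) ^ 2 * binEnt p - Real.logb 2 (N.factorial : ℝ)
        + ∑ ω : Quotient (rowRelSetoid N),
            classProb N p ω * Real.logb 2 ((autCard (Quotient.out ω) : ℝ)) :=
  partially_labeled_entropy_exact_general N p hp0 hp1
end
end

section
/- (Appendix, Lemma 10) Let p : ℕ → ℝ satisfy 0 < p(N) < 1 for all N, N·p(N)/ln N → ∞, and N·(1−p(N))/ln N → ∞ as N → ∞. For each N let Sym_u(N) be the probability that a random matrix A : Fin N → Fin N → Bool with i.i.d. Bernoulli(p(N)) entries admits a pair of permutations (σ, τ) of Fin N, not both the identity, with A (σ i) (τ j) = A i j for all i, j (i.e., the unlabeled bipartite graph is symmetric). Then for every constant w > 0, N^w · Sym_u(N) → 0 as N → ∞; that is, Sym_u(N) = O(N^{−w}) for every positive constant w. -/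
/-! A pair `(σ, τ) ≠ (1, 1)` moving `a + b` points of `Fin N` moves at least `(a + b) N / 2`
cells of the matrix, and among the moved cells one can pick `(a + b) N / 6` cells whose images
under `(σ, τ)` are not picked. An invariant matrix copies each picked entry from an unpicked one,
so `(σ, τ)` fixes `A` with probability at most `q ^ ((a + b) N / 6)`, where `q = max p (1 - p)`.
At most `N ^ (2 a)` permutations move `a` points, so the union bound over all pairs gives
`Sym_u(N) ≤ 3 N³ q ^ (N / 6)`, and `N (1 - q) / log N → ∞` makes `q ^ (N / 6)` smaller than
every power of `N`. -/

open Finset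

attribute [local instance] Classical.propDecidable

noncomputable section

/-- Probability that the random unlabeled bipartite graph is symmetric, i.e. that its
stabilizer contains a pair of permutations `(σ, τ)`, not both the identity, with
`A (σ i) (τ j) = A i j` for all `i, j`. -/
def symProbU (N : ℕ) (p : ℝ) : ℝ :=
  ∑ A : Fin N → Fin N → Bool,
    if ∃ στ : Equiv.Perm (Fin N) × Equiv.Perm (Fin N),
        στ ≠ (1, 1) ∧ ∀ i j, A (στ.1 i) (στ.2 j) = A i j then
      matProb N p A
    else 0

open Filter

namespace Equiv.Perm

variable {α : Type*} [Fintype α] [DecidableEq α]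

theorem exists_forall_apply_notMem_card_support_le (g : Perm α) :
    ∃ S : Finset α, (∀ x ∈ S, g x ∉ S) ∧ #g.support ≤ 3 * #S := by
  obtain ⟨S, hS, hmax⟩ :=
    exists_max_image (univ.powerset.filter fun S => ∀ x ∈ S, g x ∉ S) card ⟨∅, by simp⟩
  simp only [mem_filter, mem_powerset, subset_univ, true_and] at hS hmax
  refine ⟨S, hS, ?_⟩
  -- by maximality, a moved point outside `S ∪ g S ∪ g⁻¹ S` could be added to `S`
  have hcover : g.support ⊆ S ∪ S.image g ∪ S.image ⇑g⁻¹ := by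
    intro x hx
    by_contra hxcov
    simp only [mem_union, mem_image, not_or, not_exists, not_and] at hxcov
    obtain ⟨⟨hxS, hgS⟩, hgiS⟩ := hxcov
    have hins : ∀ y ∈ insert x S, g y ∉ insert x S := by
      simp only [mem_insert, forall_eq_or_imp, not_or]
      exact ⟨⟨mem_support.1 hx, fun h => hgiS (g x) h (by simp)⟩,
        fun y hy => ⟨hgS y hy, hS y hy⟩⟩
    have := hmax _ hins
    rw [card_insert_of_notMem hxS] at this
    omega
  calc #g.support ≤ #(S ∪ S.image g ∪ S.image ⇑g⁻¹) := card_le_card hcover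
    _ ≤ #S + #(S.image g) + #(S.image ⇑g⁻¹) :=
      (card_union_le _ _).trans (Nat.add_le_add_right (card_union_le _ _) _)
    _ ≤ 3 * #S := by
      linarith [card_image_le (s := S) (f := g), card_image_le (s := S) (f := ⇑g⁻¹)]

theorem support_prodCongr {β : Type*} [Fintype β] [DecidableEq β] (σ : Perm α) (τ : Perm β) :
    support (σ.prodCongr τ) = σ.support ×ˢ univ ∪ univ ×ˢ τ.support := by
  ext ⟨x, y⟩
  simp [or_iff_not_imp_left]

theorem card_support_add_mul_le_card_support_prodCongr (σ τ : Perm α) :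
    (#σ.support + #τ.support) * Fintype.card α ≤ 2 * #(support (σ.prodCongr τ)) := by
  have hσ := card_le_card (subset_union_left.trans (support_prodCongr σ τ).superset)
  have hτ := card_le_card (subset_union_right.trans (support_prodCongr σ τ).superset)
  rw [card_product, card_univ] at hσ hτ
  nlinarith

theorem card_filter_support_subset_le (s : Finset α) :
    #(univ.filter fun σ : Perm α => σ.support ⊆ s) ≤ Fintype.card α ^ #s := by
  calc _ ≤ #(univ : Finset (s → α)) := by
        refine card_le_card_of_injOn (fun σ x => σ x) (fun _ _ => mem_univ _) ?_
        intro σ hσ τ hτ h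
        ext x
        by_cases hx : x ∈ s
        · exact congrFun h ⟨x, hx⟩
        · rw [notMem_support.1 fun h => hx ((mem_filter.1 hσ).2 h),
            notMem_support.1 fun h => hx ((mem_filter.1 hτ).2 h)]
    _ = _ := by simp

theorem card_filter_card_support_eq_le (k : ℕ) :
    #(univ.filter fun σ : Perm α => #σ.support = k) ≤ (Fintype.card α ^ 2) ^ k := by
  have hcover : (univ.filter fun σ : Perm α => #σ.support = k) ⊆
      (powersetCard k univ).biUnion fun s => univ.filter fun σ : Perm α => σ.support ⊆ s := by
    intro σ hσ
    exact mem_biUnion.2 ⟨σ.support, mem_powersetCard.2 ⟨subset_univ _, (mem_filter.1 hσ).2⟩,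
      mem_filter.2 ⟨mem_univ _, subset_rfl⟩⟩
  calc _ ≤ ∑ s ∈ powersetCard k univ, #(univ.filter fun σ : Perm α => σ.support ⊆ s) :=
        (card_le_card hcover).trans card_biUnion_le
    _ ≤ ∑ s ∈ powersetCard k (univ : Finset α), Fintype.card α ^ k :=
        sum_le_sum fun s hs => (mem_powersetCard.1 hs).2 ▸ card_filter_support_subset_le s
    _ = (Fintype.card α).choose k * Fintype.card α ^ k := by
        rw [sum_const, card_powersetCard, card_univ, smul_eq_mul]
    _ ≤ (Fintype.card α ^ 2) ^ k := by
        rw [← pow_mul, mul_comm 2, pow_mul, sq]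
        exact Nat.mul_le_mul_right _ (Nat.choose_le_pow _ _)

theorem sum_pow_card_support_le {r : ℝ} (hr0 : 0 ≤ r)
    (hr : (Fintype.card α : ℝ) ^ 2 * r ≤ 1) :
    ∑ σ : Perm α, r ^ #σ.support ≤ 1 + (Fintype.card α : ℝ) ^ 5 * r ^ 2 := by
  set n := Fintype.card α
  set y := (n : ℝ) ^ 2 * r
  rw [← add_sum_erase _ _ (mem_univ 1), support_one, card_empty, pow_zero]
  have hmaps : ∀ σ ∈ univ.erase (1 : Perm α), #σ.support ∈ Icc 2 n := fun σ hσ =>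
    mem_Icc.2 ⟨two_le_card_support_of_ne_one (ne_of_mem_erase hσ), card_le_univ _⟩
  have hfiber (k : ℕ) :
      #((univ.erase (1 : Perm α)).filter fun σ => #σ.support = k) ≤ (n ^ 2) ^ k :=
    (card_le_card (filter_subset_filter _ (erase_subset _ _))).trans
      (card_filter_card_support_eq_le k)
  gcongr 1 + ?_
  calc ∑ σ ∈ univ.erase (1 : Perm α), r ^ #σ.support
      = ∑ k ∈ Icc 2 n, ∑ σ ∈ (univ.erase (1 : Perm α)).filter fun σ => #σ.support = k,
          r ^ #σ.support := (sum_fiberwise_of_maps_to hmaps _).symm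
    _ = ∑ k ∈ Icc 2 n,
          #((univ.erase (1 : Perm α)).filter fun σ => #σ.support = k) * r ^ k := by
        refine sum_congr rfl fun k _ => ?_
        rw [sum_congr rfl fun σ hσ => by rw [(mem_filter.1 hσ).2], sum_const, nsmul_eq_mul]
    _ ≤ ∑ k ∈ Icc 2 n, ((n : ℝ) ^ 2) ^ k * r ^ k := by
        gcongr with k
        exact_mod_cast hfiber k
    _ = ∑ k ∈ Icc 2 n, y ^ k := by simp only [y, mul_pow]
    _ ≤ ∑ k ∈ Icc 2 n, y ^ 2 :=
        sum_le_sum fun k hk => pow_le_pow_of_le_one (by positivity) hr (mem_Icc.1 hk).1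
    _ ≤ n * y ^ 2 := by
        rw [sum_const, Nat.card_Icc, nsmul_eq_mul]
        gcongr
        exact_mod_cast (by omega : n + 1 - 2 ≤ n)
    _ = (n : ℝ) ^ 5 * r ^ 2 := by ring

end Equiv.Perm

section InvariantColourings

variable {α β : Type*} [Fintype α] [DecidableEq α] [Fintype β] [DecidableEq β]
  {w : α → β → ℝ} {q : ℝ}

theorem sum_prod_invariant_le_pow (g : Equiv.Perm α) (hq : 0 ≤ q)
    (hw0 : ∀ x b, 0 ≤ w x b) (hwq : ∀ x b, w x b ≤ q) (hw1 : ∀ x, ∑ b, w x b = 1)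
    {S : Finset α} (hS : ∀ x ∈ S, g x ∉ S) :
    ∑ C : α → β, (if ∀ x, C (g x) = C x then ∏ x, w x (C x) else 0) ≤ q ^ #S := by
  rw [← sum_filter]
  set E := univ.filter fun C : α → β => ∀ x, C (g x) = C x
  let restrict : (α → β) → (Sᶜ : Finset α) → β := fun C x => C x
  let G : ((Sᶜ : Finset α) → β) → ℝ := fun D => ∏ x : (Sᶜ : Finset α), w x (D x)
  -- an invariant colouring is determined by its values off `S`, since `g` maps `S` into `Sᶜ`
  have hinj : Set.InjOn restrict E := by
    intro C hC C' hC' h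
    funext x
    by_cases hx : x ∈ S
    · rw [← (mem_filter.1 hC).2 x, ← (mem_filter.1 hC').2 x]
      exact congrFun h ⟨g x, mem_compl.2 (hS x hx)⟩
    · exact congrFun h ⟨x, mem_compl.2 hx⟩
  have hsplit : ∀ C ∈ E, ∏ x, w x (C x) ≤ q ^ #S * G (restrict C) := by
    intro C _
    rw [← prod_mul_prod_compl S, ← prod_coe_sort Sᶜ fun x => w x (C x)]
    gcongr
    · exact prod_nonneg fun x _ => hw0 x _
    · exact (prod_le_prod (fun x _ => hw0 x _) fun x _ => hwq x _).trans_eq (prod_const q)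
  calc ∑ C ∈ E, ∏ x, w x (C x) ≤ ∑ C ∈ E, q ^ #S * G (restrict C) := sum_le_sum hsplit
    _ = q ^ #S * ∑ D ∈ E.image restrict, G D := by rw [sum_image hinj, mul_sum]
    _ ≤ q ^ #S * ∑ D, G D := mul_le_mul_of_nonneg_left
      (sum_le_univ_sum_of_nonneg fun D => prod_nonneg fun x _ => hw0 x _) (pow_nonneg hq _)
    _ = q ^ #S := by simp only [G, ← Fintype.prod_sum, hw1, prod_const_one, mul_one]

theorem sum_prod_invariant_le_rpow (g : Equiv.Perm α) (hq0 : 0 ≤ q) (hq1 : q ≤ 1)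
    (hw0 : ∀ x b, 0 ≤ w x b) (hwq : ∀ x b, w x b ≤ q) (hw1 : ∀ x, ∑ b, w x b = 1) :
    ∑ C : α → β, (if ∀ x, C (g x) = C x then ∏ x, w x (C x) else 0) ≤
      q ^ ((#g.support : ℝ) / 3) := by
  obtain ⟨S, hS, hcard⟩ := g.exists_forall_apply_notMem_card_support_le
  calc _ ≤ q ^ #S := sum_prod_invariant_le_pow g hq0 hw0 hwq hw1 hS
    _ = q ^ (#S : ℝ) := (Real.rpow_natCast q _).symm
    _ ≤ q ^ ((#g.support : ℝ) / 3) := by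
      refine Real.rpow_le_rpow_of_exponent_ge' hq0 hq1 (by positivity) ?_
      rw [div_le_iff₀ (by norm_num)]
      exact_mod_cast (by omega : #g.support ≤ #S * 3)

end InvariantColourings

theorem sum_ite_exists_le_sum_sum {ι α : Type*} [Fintype ι] [Fintype α] (Q : ι → Prop)
    [DecidablePred Q] (P : ι → α → Prop) [∀ i a, Decidable (P i a)]
    [∀ a, Decidable (∃ i, Q i ∧ P i a)] {f : α → ℝ} (hf : ∀ a, 0 ≤ f a) :
    ∑ a, (if ∃ i, Q i ∧ P i a then f a else 0) ≤
      ∑ i ∈ univ.filter Q, ∑ a, if P i a then f a else 0 := by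
  rw [sum_comm]
  refine sum_le_sum fun a _ => ?_
  have hnonneg : ∀ i ∈ univ.filter Q, 0 ≤ if P i a then f a else 0 :=
    fun i _ => ite_nonneg (hf a) le_rfl
  split_ifs with h
  · obtain ⟨i, hQ, hP⟩ := h
    calc f a = if P i a then f a else 0 := (if_pos hP).symm
      _ ≤ _ := single_le_sum hnonneg (mem_filter.2 ⟨mem_univ i, hQ⟩)
  · exact sum_nonneg hnonneg

section RandomMatrix

variable {N : ℕ} {p : ℝ}

theorem matProb_eq_prod_s9 (p : ℝ) (A : Fin N → Fin N → Bool) :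
    matProb N p A = ∏ x : Fin N × Fin N, if A x.1 x.2 then p else 1 - p := by
  have hcard := card_filter_add_card_filter_not (s := (univ : Finset (Fin N × Fin N)))
    (fun x => A x.1 x.2 = true)
  rw [card_univ, Fintype.card_prod, Fintype.card_fin, ← sq] at hcard
  rw [prod_ite, prod_const, prod_const, matProb, edgeCount]
  congr 2
  omega

theorem matProb_nonneg (hp0 : 0 ≤ p) (hp1 : p ≤ 1) (A : Fin N → Fin N → Bool) :
    0 ≤ matProb N p A :=
  mul_nonneg (pow_nonneg hp0 _) (pow_nonneg (sub_nonneg.2 hp1) _)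

theorem symProbU_nonneg (hp0 : 0 ≤ p) (hp1 : p ≤ 1) : 0 ≤ symProbU N p :=
  sum_nonneg fun A _ => ite_nonneg (matProb_nonneg hp0 hp1 A) le_rfl

theorem sum_matProb_invariant_le (hp0 : 0 ≤ p) (hp1 : p ≤ 1) (σ τ : Equiv.Perm (Fin N)) :
    ∑ A : Fin N → Fin N → Bool,
        (if ∀ i j, A (σ i) (τ j) = A i j then matProb N p A else 0) ≤
      (max p (1 - p) ^ ((N : ℝ) / 6)) ^ (#σ.support + #τ.support) := by
  set q := max p (1 - p)
  have hq0 : 0 ≤ q := le_max_of_le_left hp0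
  have hq1 : q ≤ 1 := max_le hp1 (by linarith)
  have hsupp := σ.card_support_add_mul_le_card_support_prodCongr τ
  rw [Fintype.card_fin] at hsupp
  calc _ = ∑ C : Fin N × Fin N → Bool, if ∀ x, C (σ.prodCongr τ x) = C x then
          ∏ x, (if C x then p else 1 - p) else 0 :=
        Fintype.sum_equiv (Equiv.curry _ _ _).symm _ _ fun A => by
          simp [matProb_eq_prod_s9, Prod.forall, Function.uncurry]
    _ ≤ q ^ ((#(Equiv.Perm.support (σ.prodCongr τ)) : ℝ) / 3) :=
        sum_prod_invariant_le_rpow _ (w := fun _ (b : Bool) => if b then p else 1 - p) hq0 hq1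
          (fun _ b => by cases b <;> simp [hp0, hp1]) (fun _ b => by cases b <;> simp [q])
          (fun _ => by simp)
    _ ≤ q ^ ((N : ℝ) / 6 * (#σ.support + #τ.support : ℕ)) := by
        refine Real.rpow_le_rpow_of_exponent_ge' hq0 hq1 (by positivity) ?_
        rw [div_mul_eq_mul_div, div_le_div_iff₀ (by norm_num) (by norm_num)]
        exact_mod_cast (by nlinarith : N * (#σ.support + #τ.support) * 3 ≤ _ * 6)
    _ = _ := by rw [Real.rpow_mul hq0, Real.rpow_natCast]

theorem symProbU_le_sq_sub_one (hp0 : 0 ≤ p) (hp1 : p ≤ 1) :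
    symProbU N p ≤
      (∑ σ : Equiv.Perm (Fin N), (max p (1 - p) ^ ((N : ℝ) / 6)) ^ #σ.support) ^ 2 - 1 := by
  set r := max p (1 - p) ^ ((N : ℝ) / 6)
  calc symProbU N p
      ≤ ∑ στ ∈ univ.filter
            fun στ : Equiv.Perm (Fin N) × Equiv.Perm (Fin N) => στ ≠ (1, 1),
          ∑ A : Fin N → Fin N → Bool,
            if ∀ i j, A (στ.1 i) (στ.2 j) = A i j then matProb N p A else 0 :=
        sum_ite_exists_le_sum_sum _ _ (matProb_nonneg hp0 hp1)
    _ ≤ ∑ στ ∈ univ.erase ((1, 1) : Equiv.Perm (Fin N) × Equiv.Perm (Fin N)),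
          r ^ #στ.1.support * r ^ #στ.2.support := by
        rw [filter_ne']
        refine sum_le_sum fun στ _ => ?_
        rw [← pow_add]
        exact sum_matProb_invariant_le hp0 hp1 στ.1 στ.2
    _ = _ := by
        rw [sum_erase_eq_sub (mem_univ _), Fintype.sum_prod_type, sq, Fintype.sum_mul_sum]
        simp

theorem symProbU_le (hp0 : 0 ≤ p) (hp1 : p ≤ 1)
    (hr : (N : ℝ) ^ 3 * max p (1 - p) ^ ((N : ℝ) / 6) ≤ 1) :
    symProbU N p ≤ 3 * ((N : ℝ) ^ 3 * max p (1 - p) ^ ((N : ℝ) / 6)) := by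
  set r := max p (1 - p) ^ ((N : ℝ) / 6)
  have hr0 : 0 ≤ r := Real.rpow_nonneg (le_max_of_le_left hp0) _
  have hN : (N : ℝ) ^ 2 ≤ (N : ℝ) ^ 3 := by
    rcases N.eq_zero_or_pos with rfl | hN
    · simp
    · exact pow_le_pow_right₀ (by exact_mod_cast hN) (by norm_num)
  have hr2 : (N : ℝ) ^ 2 * r ≤ 1 := (mul_le_mul_of_nonneg_right hN hr0).trans hr
  have hsum := Equiv.Perm.sum_pow_card_support_le (α := Fin N) hr0 (by simpa using hr2)
  rw [Fintype.card_fin] at hsum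
  have hsmall : (N : ℝ) ^ 5 * r ^ 2 ≤ N ^ 3 * r := by
    calc (N : ℝ) ^ 5 * r ^ 2 = (N ^ 3 * r) * (N ^ 2 * r) := by ring
      _ ≤ N ^ 3 * r * 1 := by gcongr
      _ = N ^ 3 * r := mul_one _
  calc symProbU N p ≤ (∑ σ : Equiv.Perm (Fin N), r ^ #σ.support) ^ 2 - 1 :=
        symProbU_le_sq_sub_one hp0 hp1
    _ ≤ (1 + N ^ 3 * r) ^ 2 - 1 := by
        gcongr
        exact hsum.trans (by linarith)
    _ ≤ 3 * (N ^ 3 * r) := by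
        nlinarith [mul_le_mul_of_nonneg_left hr (by positivity : 0 ≤ (N : ℝ) ^ 3 * r)]

end RandomMatrix

theorem tendsto_mul_one_sub_max_div_log {p : ℕ → ℝ}
    (hgrow : Tendsto (fun N : ℕ => (N : ℝ) * p N / Real.log N) atTop atTop)
    (hgrow' : Tendsto (fun N : ℕ => (N : ℝ) * (1 - p N) / Real.log N) atTop atTop) :
    Tendsto (fun N : ℕ => (N : ℝ) * (1 - max (p N) (1 - p N)) / Real.log N) atTop atTop := by
  refine tendsto_atTop.2 fun b => ?_
  filter_upwards [hgrow.eventually_ge_atTop b, hgrow'.eventually_ge_atTop b] with N h h'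
  rcases max_cases (p N) (1 - p N) with ⟨hmax, -⟩ | ⟨hmax, -⟩ <;> rw [hmax]
  · exact h'
  · rwa [sub_sub_cancel]

theorem eventually_rpow_div_le_rpow_neg {q : ℕ → ℝ} (hq : ∀ N, 0 < q N)
    (h : Tendsto (fun N : ℕ => (N : ℝ) * (1 - q N) / Real.log N) atTop atTop)
    {c : ℝ} (hc : 0 < c) (K : ℝ) :
    ∀ᶠ N : ℕ in atTop, q N ^ ((N : ℝ) / c) ≤ (N : ℝ) ^ (-K) := by
  filter_upwards [h.eventually_ge_atTop (c * K), eventually_gt_atTop 1] with N hN hN1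
  have hN1 : (1 : ℝ) < N := by exact_mod_cast hN1
  have hlog : 0 < Real.log N := Real.log_pos hN1
  have hK : c * K * Real.log N ≤ N * (1 - q N) := (le_div_iff₀ hlog).1 hN
  have hq1 : Real.log (q N) ≤ q N - 1 := Real.log_le_sub_one_of_pos (hq N)
  rw [Real.rpow_def_of_pos (hq N), Real.rpow_def_of_pos (by linarith), Real.exp_le_exp,
    mul_div_assoc', div_le_iff₀ hc]
  nlinarith [Nat.cast_nonneg (α := ℝ) N]

/-- Appendix, Lemma 10: under `N·p(N)/ln N → ∞` and `N·(1−p(N))/ln N → ∞`, a random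
unlabeled bipartite graph is symmetric with probability `O(N^{−w})` for every positive
constant `w`: indeed `N^w · Sym_u(N) → 0`. -/
theorem unlabeled_symmetry_rare (p : ℕ → ℝ)
    (hp : ∀ N, 0 < p N ∧ p N < 1)
    (hgrow : Filter.Tendsto (fun N : ℕ => (N : ℝ) * p N / Real.log N)
      Filter.atTop Filter.atTop)
    (hgrow' : Filter.Tendsto (fun N : ℕ => (N : ℝ) * (1 - p N) / Real.log N)
      Filter.atTop Filter.atTop) :
    ∀ w : ℝ, 0 < w →
      Filter.Tendsto (fun N : ℕ => (N : ℝ) ^ w * symProbU N (p N))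
        Filter.atTop (nhds 0) := by
  intro w _
  have hsmall := eventually_rpow_div_le_rpow_neg (q := fun N => max (p N) (1 - p N))
    (fun N => lt_max_of_lt_left (hp N).1) (tendsto_mul_one_sub_max_div_log hgrow hgrow')
    (by norm_num : (0 : ℝ) < 6) (w + 4)
  refine squeeze_zero' (Eventually.of_forall fun N => mul_nonneg (by positivity)
    (symProbU_nonneg (hp N).1.le (hp N).2.le)) ?_ (tendsto_const_div_atTop_nhds_zero_nat 3)
  filter_upwards [hsmall, eventually_ge_atTop 1] with N hr hN
  have hN0 : (0 : ℝ) < N := by exact_mod_cast hN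
  have hr3 : (N : ℝ) ^ 3 * max (p N) (1 - p N) ^ ((N : ℝ) / 6) ≤ (N : ℝ) ^ (-(w + 1)) := by
    calc _ ≤ (N : ℝ) ^ 3 * (N : ℝ) ^ (-(w + 4)) := by gcongr
      _ = (N : ℝ) ^ (-(w + 1)) := by
        rw [← Real.rpow_natCast, ← Real.rpow_add hN0]
        congr 1
        push_cast
        ring
  have hr1 : (N : ℝ) ^ (-(w + 1)) ≤ 1 :=
    Real.rpow_le_one_of_one_le_of_nonpos (by exact_mod_cast hN) (by linarith)
  calc (N : ℝ) ^ w * symProbU N (p N)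
      ≤ (N : ℝ) ^ w * (3 * (N : ℝ) ^ (-(w + 1))) := by
        gcongr
        exact (symProbU_le (hp N).1.le (hp N).2.le (hr3.trans hr1)).trans (by gcongr)
    _ = 3 / N := by
        rw [Real.rpow_neg hN0.le, Real.rpow_add hN0, Real.rpow_one]
        field_simp
end
end

section
/- (Appendix, Lemma 11) Fix p ∈ (0,1) and set q = 1 − p. Let x : ℕ → ℝ satisfy x(0) = x(1) = 0 and, for all n ≥ 2, x(n) = ⌈log₂(n+1)⌉ + Σ_{k=0}^{n} C(n,k)·p^k·q^{n−k}·(x(k) + x(n−k)). Let a : ℕ → ℕ → ℝ satisfy: a(0,d) = a(1,d) = 0 for all d ≥ 0; a(2,0) = 0; for all n ≥ 2, a(n+1,0) = ⌈log₂(n+1)⌉ + Σ_{k=0}^{n} C(n,k)·p^k·q^{n−k}·(a(k,1) + a(n−k,2k+1)); for all n ≥ 2 and d ≥ 1, a(n,d) = ⌈log₂(n+1)⌉ + Σ_{k=0}^{n} C(n,k)·p^k·q^{n−k}·(a(k,d−1) + a(n−k,2k+d−1)); and a(n,0) ≤ a(n+1,0) for all n ≥ 0. Then a(n,d) ≤ x(n)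 for all integers n ≥ 0 and d ≥ 0. -/
open Finset

/-- Appendix, Lemma 11: the expected code lengths `a(n,d)` of the trees `T²_{n,d,p}`
(arising in the compression of `K`-layer unlabeled graphs) are majorized by the
Choi–Szpankowski recursion `x(n)`. The case `d ≥ 1` of the recursion for `a` is stated
with `d` replaced by `d + 1`. -/
theorem a_le_x (p : ℝ) (hp0 : 0 < p) (hp1 : p < 1) (q : ℝ) (hq : q = 1 - p)
    (x : ℕ → ℝ) (hx0 : x 0 = 0) (hx1 : x 1 = 0)
    (hx : ∀ n, 2 ≤ n →
      x n = ((⌈Real.logb 2 ((n : ℝ) + 1)⌉ : ℤ) : ℝ)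
        + ∑ k ∈ Finset.range (n + 1),
            (n.choose k : ℝ) * p ^ k * q ^ (n - k) * (x k + x (n - k)))
    (a : ℕ → ℕ → ℝ)
    (ha0 : ∀ d, a 0 d = 0) (ha1 : ∀ d, a 1 d = 0) (ha20 : a 2 0 = 0)
    (haRec0 : ∀ n, 2 ≤ n →
      a (n + 1) 0 = ((⌈Real.logb 2 ((n : ℝ) + 1)⌉ : ℤ) : ℝ)
        + ∑ k ∈ Finset.range (n + 1),
            (n.choose k : ℝ) * p ^ k * q ^ (n - k) * (a k 1 + a (n - k) (2 * k + 1)))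
    (haRec : ∀ n d, 2 ≤ n →
      a n (d + 1) = ((⌈Real.logb 2 ((n : ℝ) + 1)⌉ : ℤ) : ℝ)
        + ∑ k ∈ Finset.range (n + 1),
            (n.choose k : ℝ) * p ^ k * q ^ (n - k) * (a k d + a (n - k) (2 * k + d)))
    (hmono : ∀ n, a n 0 ≤ a (n + 1) 0) :
    ∀ n d, a n d ≤ x n := by

  have hq0 : 0 < q := by rw [hq]; linarith
  have main : ∀ n, 2 ≤ n → (∀ m, m < n → ∀ d, a m d ≤ x m) → ∀ d, a n d ≤ x n := by
    intro n hn IH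
    set L : ℝ := ((⌈Real.logb 2 ((n : ℝ) + 1)⌉ : ℤ) : ℝ) with hL
    set c : ℝ := p ^ n + q ^ n with hc
    set M : ℝ := ∑ k ∈ Finset.Ico 1 n,
        (n.choose k : ℝ) * p ^ k * q ^ (n - k) * (x k + x (n - k)) with hM
    have split : ∀ f : ℕ → ℝ,
        ∑ k ∈ Finset.range (n + 1), f k = f 0 + (∑ k ∈ Finset.Ico 1 n, f k) + f n := by
      intro f
      rw [Finset.sum_range_succ, Finset.range_eq_Ico,
        Finset.sum_eq_sum_Ico_succ_bot (by omega : 0 < n)]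
    have hc0 : 0 ≤ c := by rw [hc]; positivity
    have hc1 : c < 1 := by
      have h1 : p ^ n ≤ p ^ 2 := pow_le_pow_of_le_one hp0.le hp1.le hn
      have h2 : q ^ n ≤ q ^ 2 := pow_le_pow_of_le_one hq0.le (by rw [hq]; linarith) hn
      have h3 : p ^ 2 + q ^ 2 < 1 := by rw [hq]; nlinarith [mul_pos hp0 hq0]
      rw [hc]; linarith
    -- the equation for x
    have hxEq : x n = L + M + c * x n := by
      have h := hx n hn
      rw [split] at h
      simp only [Nat.choose_zero_right, Nat.choose_self, pow_zero, Nat.sub_zero,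
        Nat.sub_self, hx0, Nat.cast_one, one_mul, mul_one, zero_add, add_zero] at h
      rw [hc]
      linear_combination h
    -- bounding the middle sums by IH
    have mid_le : ∀ d' : ℕ,
        ∑ k ∈ Finset.Ico 1 n,
          (n.choose k : ℝ) * p ^ k * q ^ (n - k) * (a k d' + a (n - k) (2 * k + d')) ≤ M := by
      intro d'
      rw [hM]
      apply Finset.sum_le_sum
      intro k hk
      obtain ⟨hk1, hk2⟩ := Finset.mem_Ico.mp hk
      have h1 := IH k (by omega) d'
      have h2 := IH (n - k) (by omega) (2 * k + d')
      have hnn : (0 : ℝ) ≤ (n.choose k : ℝ) * p ^ k * q ^ (n - k) := by positivity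
      exact mul_le_mul_of_nonneg_left (add_le_add h1 h2) hnn
    have hc' : ∀ y : ℝ, c * y = p ^ n * y + q ^ n * y := by
      intro y; rw [hc]; ring
    -- the step inequality for d ≥ 1
    have step : ∀ d, a n (d + 1) ≤ L + M + c * a n d := by
      intro d
      have h := haRec n d hn
      rw [split] at h
      simp only [Nat.choose_zero_right, Nat.choose_self, pow_zero, Nat.sub_zero,
        Nat.sub_self, ha0, Nat.cast_one, one_mul, mul_one, zero_add, add_zero,
        mul_zero] at h
      have hm := mid_le d
      have hcy := hc' (a n d)
      linarith [h, hm, hcy]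
    -- the inequality for d = 0
    have step0 : a n 0 ≤ L + M + c * a n 1 := by
      have h := (haRec0 n hn) ▸ (hmono n)
      rw [split] at h
      simp only [Nat.choose_zero_right, Nat.choose_self, pow_zero, Nat.sub_zero,
        Nat.sub_self, ha0, Nat.cast_one, one_mul, mul_one, zero_add, add_zero,
        mul_zero] at h
      have hm := mid_le 1
      have hcy := hc' (a n 1)
      linarith [h, hm, hcy]
    -- conclude a n 1 ≤ x n
    have h1x : a n 1 ≤ x n := by
      have e1 := step 0
      simp only [zero_add] at e1
      have e2 := step0
      have e5 : a n 1 - x n ≤ c * (a n 0 - x n) := by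
        have : c * (a n 0 - x n) = c * a n 0 - c * x n := by ring
        linarith [e1, hxEq, this]
      have e6 : a n 0 - x n ≤ c * (a n 1 - x n) := by
        have : c * (a n 1 - x n) = c * a n 1 - c * x n := by ring
        linarith [e2, hxEq, this]
      have e7 := mul_le_mul_of_nonneg_left e6 hc0
      have hcc : c * c < 1 := by nlinarith
      nlinarith [e5, e7, hcc]
    have h0x : a n 0 ≤ x n := by
      have := mul_le_mul_of_nonneg_left h1x hc0
      linarith [step0, hxEq]
    intro d
    induction d with
    | zero => exact h0x
    | succ d ihd =>
      have := mul_le_mul_of_nonneg_left ihd hc0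
      linarith [step d, hxEq]
  intro n
  induction n using Nat.strong_induction_on with
  | _ n IH =>
    match n with
    | 0 => intro d; simp [ha0, hx0]
    | 1 => intro d; simp [ha1, hx1]
    | (m + 2) => exact main (m + 2) (by omega) (fun k hk => IH k hk)
end

section
/- (Appendix, Lemma 12) Fix p ∈ (0,1) and set q = 1 − p. Let y : ℕ → ℝ satisfy y(0) = 0, y(n+1) = n + Σ_{k=0}^{n} C(n,k)·p^k·q^{n−k}·(y(k) + y(n−k)) for all n ≥ 0, and assume y(n+1) ≥ y(n) for all n ≥ 0. Let b : ℕ → ℕ → ℝ satisfy: b(0,d) = b(1,d) = 0 for all d ≥ 0; b(2,0) = 0; for all n ≥ 3, b(n,0) = (n−1) + Σ_{k=0}^{n−1} C(n−1,k)·p^k·q^{n−1−k}·(b(k,1) + b(n−1−k,2k+1)); and for all n ≥ 2 and d ≥ 1, b(n,d) = n + Σ_{k=0}^{n} C(n,k)·p^k·q^{n−k}·(b(k,d−1) + b(n−k,2k+d−1)). Then b(n,d) ≥ y(n) − n/2 for all integers n ≥ 0 and d ≥ 0. -/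
open Finset

/-- Appendix, Lemma 12: the quantities `b(n,d)` of the trees `T²_{n,d,p}` (arising in the
compression of `K`-layer unlabeled graphs) are minorized by the Choi–Szpankowski
recursion `y(n)` up to `n/2`. The case `n ≥ 3, d = 0` of the recursion for `b` is stated
with `n` replaced by `n + 1` (so `n ≥ 2`), and the case `d ≥ 1` with `d` replaced by
`d + 1`. -/
theorem b_ge_y (p : ℝ) (hp0 : 0 < p) (hp1 : p < 1) (q : ℝ) (hq : q = 1 - p)
    (y : ℕ → ℝ) (hy0 : y 0 = 0)
    (hy : ∀ n : ℕ,
      y (n + 1) = (n : ℝ)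
        + ∑ k ∈ Finset.range (n + 1),
            (n.choose k : ℝ) * p ^ k * q ^ (n - k) * (y k + y (n - k)))
    (hymono : ∀ n, y n ≤ y (n + 1))
    (b : ℕ → ℕ → ℝ)
    (hb0 : ∀ d, b 0 d = 0) (hb1 : ∀ d, b 1 d = 0) (hb20 : b 2 0 = 0)
    (hbRec0 : ∀ n, 2 ≤ n →
      b (n + 1) 0 = (n : ℝ)
        + ∑ k ∈ Finset.range (n + 1),
            (n.choose k : ℝ) * p ^ k * q ^ (n - k) * (b k 1 + b (n - k) (2 * k + 1)))
    (hbRec : ∀ n d, 2 ≤ n →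
      b n (d + 1) = (n : ℝ)
        + ∑ k ∈ Finset.range (n + 1),
            (n.choose k : ℝ) * p ^ k * q ^ (n - k) * (b k d + b (n - k) (2 * k + d))) :
    ∀ n d, y n - (n : ℝ) / 2 ≤ b n d := by
  have hq0 : (0:ℝ) < q := by rw [hq]; linarith
  have hpq : p + q = 1 := by rw [hq]; ring
  have hnn : ∀ m k : ℕ, (0:ℝ) ≤ (m.choose k : ℝ) * p ^ k * q ^ (m - k) := by
    intro m k; positivity
  have hsum1 : ∀ m : ℕ,
      ∑ k ∈ Finset.range (m+1), (m.choose k : ℝ) * p ^ k * q ^ (m - k) = 1 := by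
    intro m
    have h := add_pow p q m
    rw [hpq, one_pow] at h
    calc ∑ k ∈ Finset.range (m+1), (m.choose k : ℝ) * p ^ k * q ^ (m - k)
        = ∑ k ∈ Finset.range (m+1), p ^ k * q ^ (m - k) * (m.choose k : ℝ) :=
          Finset.sum_congr rfl (fun k _ => by ring)
      _ = 1 := h.symm
  have hkey : ∀ m : ℕ,
      ∑ k ∈ Finset.range (m+1),
        (m.choose k : ℝ) * p ^ k * q ^ (m - k) * (y k + y (m - k) - (m:ℝ)/2)
      = y (m+1) - (m:ℝ) - (m:ℝ)/2 := by
    intro m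
    have h1 := hy m
    have h2 := hsum1 m
    have h3 : ∑ k ∈ Finset.range (m+1),
        (m.choose k : ℝ) * p ^ k * q ^ (m - k) * (y k + y (m - k) - (m:ℝ)/2)
        = (∑ k ∈ Finset.range (m+1),
            (m.choose k : ℝ) * p ^ k * q ^ (m - k) * (y k + y (m - k)))
          - (m:ℝ)/2 * ∑ k ∈ Finset.range (m+1),
              (m.choose k : ℝ) * p ^ k * q ^ (m - k) := by
      rw [Finset.mul_sum, ← Finset.sum_sub_distrib]
      exact Finset.sum_congr rfl (fun k _ => by ring)
    rw [h3, h2]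
    linarith
  have hy1 : y 1 = 0 := by
    have h := hy 0
    simpa [hy0] using h
  have hy2 : y 2 = 1 := by
    have h := hy 1
    rw [Finset.sum_range_succ, Finset.sum_range_one] at h
    simp [hy0, hy1] at h
    linarith
  intro n
  induction n using Nat.strong_induction_on with
  | _ n ih =>
    intro d
    match n, ih with
    | 0, _ => simp [hb0, hy0]
    | 1, _ => rw [hb1, hy1]; norm_num
    | (m+2), ih =>
      induction d with
      | zero =>
        rcases m with _ | m
        · rw [hb20, hy2]; norm_num
        · show y (m+2+1) - ((m+2+1 : ℕ) : ℝ)/2 ≤ b (m+2+1) 0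
          rw [hbRec0 (m+2) (by omega)]
          have hs : ∑ k ∈ Finset.range (m+2+1),
              ((m+2).choose k : ℝ) * p ^ k * q ^ (m+2-k)
                * (y k + y (m+2-k) - ((m+2 : ℕ):ℝ)/2)
              ≤ ∑ k ∈ Finset.range (m+2+1),
              ((m+2).choose k : ℝ) * p ^ k * q ^ (m+2-k)
                * (b k 1 + b (m+2-k) (2*k+1)) := by
            apply Finset.sum_le_sum
            intro k hk
            apply mul_le_mul_of_nonneg_left _ (hnn _ _)
            have hk' : k ≤ m+2 := Nat.lt_succ_iff.mp (Finset.mem_range.mp hk)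
            have hc : ((m+2-k : ℕ):ℝ) = ((m+2 : ℕ):ℝ) - (k:ℝ) := by
              rw [Nat.cast_sub hk']
            have h1 := ih k (by omega) 1
            have h2 := ih (m+2-k) (by omega) (2*k+1)
            linarith
          have hk2 := hkey (m+2)
          push_cast at hs hk2 ⊢
          linarith [hymono (m+2)]
      | succ d ihd =>
        rw [hbRec (m+2) d (by omega)]
        have hs : ∑ k ∈ Finset.range (m+2+1),
            ((m+2).choose k : ℝ) * p ^ k * q ^ (m+2-k)
              * (y k + y (m+2-k) - ((m+2 : ℕ):ℝ)/2)
            ≤ ∑ k ∈ Finset.range (m+2+1),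
            ((m+2).choose k : ℝ) * p ^ k * q ^ (m+2-k)
              * (b k d + b (m+2-k) (2*k+d)) := by
          apply Finset.sum_le_sum
          intro k hk
          apply mul_le_mul_of_nonneg_left _ (hnn _ _)
          have hk' : k ≤ m+2 := Nat.lt_succ_iff.mp (Finset.mem_range.mp hk)
          have hc : ((m+2-k : ℕ):ℝ) = ((m+2 : ℕ):ℝ) - (k:ℝ) := by
            rw [Nat.cast_sub hk']
          by_cases h0 : k = 0
          · subst h0
            simp only [Nat.sub_zero, Nat.mul_zero, Nat.zero_add, hy0, hb0,
              Nat.cast_zero, mul_zero, zero_add]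
            linarith [ihd]
          · by_cases hm : k = m+2
            · subst hm
              simp only [Nat.sub_self, hy0, hb0, add_zero]
              linarith [ihd]
            · have h1 := ih k (by omega) d
              have h2 := ih (m+2-k) (by omega) (2*k+d)
              linarith
        have hk2 := hkey (m+2)
        push_cast at hs hk2 ⊢
        linarith [hymono (m+2)]
end

section
/- (Core inequality of Proposition 2) Let M ≥ 1 and N ≥ 0 be integers and let α : Fin M → ℕ satisfy Σ_{i} α(i) ≤ N. Then Σ_{i} log₂(α(i) + 1) ≤ M·log₂((M + N)/M), and consequently Σ_{i} (2·log₂(α(i) + 1) + 1) ≤ M + 2M·log₂((M + N)/M). In particular, with M = (m+1)·N this gives the bound N(m+1) + 2N(m+1)·log₂((m+2)/(m+1)) on the space needed to store one depth-level of the count tree using Elias-Gamma integer codes. -/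
open Finset

/-- Core inequality of Proposition 2 (AM–GM step bounding the dynamic space of the
inference algorithm): if the `M` counts `α i` sum to at most `N`, then
`Σ_i log₂(α i + 1) ≤ M·log₂((M + N)/M)`, and consequently the Elias-Gamma codelengths
satisfy `Σ_i (2·log₂(α i + 1) + 1) ≤ M + 2M·log₂((M + N)/M)`. -/
theorem queue_space_bound (M N : ℕ) (hM : 1 ≤ M)
    (α : Fin M → ℕ) (hα : ∑ i, α i ≤ N) :
    (∑ i, Real.logb 2 ((α i : ℝ) + 1)
        ≤ (M : ℝ) * Real.logb 2 (((M : ℝ) + (N : ℝ)) / (M : ℝ))) ∧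
    (∑ i, (2 * Real.logb 2 ((α i : ℝ) + 1) + 1)
        ≤ (M : ℝ) + 2 * (M : ℝ) * Real.logb 2 (((M : ℝ) + (N : ℝ)) / (M : ℝ))) := by
  have hM0 : (0:ℝ) < M := by exact_mod_cast hM
  have hconc : ConcaveOn ℝ (Set.Ioi 0) Real.log := strictConcaveOn_log_Ioi.concaveOn
  have hjensen := hconc.le_map_sum (t := Finset.univ) (w := fun _ : Fin M => 1 / (M:ℝ))
    (p := fun i => (α i : ℝ) + 1)
    (fun i _ => by positivity)
    (by simp [Finset.card_univ]; field_simp)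
    (fun i _ => by have : (0:ℝ) ≤ α i := Nat.cast_nonneg _; simp; linarith)
  have hsum : ∑ i, ((α i : ℝ) + 1) ≤ (M:ℝ) + (N:ℝ) := by
    rw [Finset.sum_add_distrib]
    simp [Finset.card_univ]
    have : ((∑ i, α i : ℕ) : ℝ) ≤ (N:ℝ) := by exact_mod_cast hα
    push_cast at this
    linarith
  have key : ∑ i, Real.log ((α i : ℝ) + 1) ≤ (M:ℝ) * Real.log (((M:ℝ) + N) / M) := by
    have h1 : ∑ i, (1/(M:ℝ)) • Real.log ((α i : ℝ) + 1)
        ≤ Real.log (∑ i, (1/(M:ℝ)) • ((α i : ℝ) + 1)) := hjensen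
    have h2 : Real.log (∑ i, (1/(M:ℝ)) • ((α i : ℝ) + 1))
        ≤ Real.log (((M:ℝ) + N) / M) := by
      apply Real.log_le_log
      · have : (0:ℝ) < ∑ i, (1/(M:ℝ)) • ((α i : ℝ) + 1) := by
          apply Finset.sum_pos
          · intro i _; have : (0:ℝ) ≤ α i := Nat.cast_nonneg _
            simp only [smul_eq_mul]; positivity
          · exact Finset.univ_nonempty_iff.mpr ⟨⟨0, hM⟩⟩
        exact this
      · simp only [smul_eq_mul, ← Finset.mul_sum, div_eq_mul_inv, one_mul]
        rw [mul_comm ((M:ℝ) + N) _]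
        exact mul_le_mul_of_nonneg_left hsum (by positivity)
    have h3 := le_trans h1 h2
    simp only [smul_eq_mul, ← Finset.mul_sum] at h3
    calc ∑ i, Real.log ((α i : ℝ) + 1)
        = (M:ℝ) * ((1/(M:ℝ)) * ∑ i, Real.log ((α i : ℝ) + 1)) := by field_simp
      _ ≤ (M:ℝ) * Real.log (((M:ℝ) + N) / M) :=
          mul_le_mul_of_nonneg_left h3 hM0.le
  have hlog2 : (0:ℝ) < Real.log 2 := Real.log_pos one_lt_two
  have first : ∑ i, Real.logb 2 ((α i : ℝ) + 1)
      ≤ (M : ℝ) * Real.logb 2 (((M : ℝ) + (N : ℝ)) / (M : ℝ)) := by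
    have heq : ∑ i, Real.logb 2 ((α i:ℝ)+1)
        = (∑ i, Real.log ((α i:ℝ)+1)) / Real.log 2 := by
      simp [Real.logb, Finset.sum_div]
    rw [heq, Real.logb, ← mul_div_assoc]
    gcongr
  refine ⟨first, ?_⟩
  rw [Finset.sum_add_distrib]
  simp only [← Finset.mul_sum, Finset.sum_const, Finset.card_univ, Fintype.card_fin,
    nsmul_eq_mul, mul_one]
  have := mul_le_mul_of_nonneg_left first (by norm_num : (0:ℝ) ≤ 2)
  linarith [this]
end
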